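/- arXiv:1905.04575 — 2 statements merged into one kernel-verified Lean document; each statement's English description precedes it below -/
import Mathlib

section
/- For a linearly continuous function f : X → Y from a Baire topological vector space X to a Tychonoff (completely regular Hausdorff) space Y, the following conditions are equivalent: (1) f is conically quasi-continuous; (2) f is quasi-continuous; (3) f is BP-measurable. -/
open Topology Filter Set TopologicalSpace

section Definitions

variable {X Y : Type*}

/-- A set `U` is functionally open if it is the preimage of an open set of `ℝ`
under a continuous real-valued function. -/
def FunctionallyOpen [TopologicalSpace Y] (U : Set Y) : Prop :=
  ∃ g : Y → ℝ, Continuous g ∧ ∃ V : Set ℝ, IsOpen V ∧ U = g ⁻¹' V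

/-- A set is `Fσ` if it is a countable union of closed sets. -/
def IsFSigma [TopologicalSpace X] (s : Set X) : Prop :=
  ∃ F : ℕ → Set X, (∀ n, IsClosed (F n)) ∧ s = ⋃ n, F n

/-- A function is `Fσ`-measurable if preimages of functionally open sets are `Fσ`. -/
def FSigmaMeasurable [TopologicalSpace X] [TopologicalSpace Y] (f : X → Y) : Prop :=
  ∀ U : Set Y, FunctionallyOpen U → IsFSigma (f ⁻¹' U)

/-- A set has the Baire property if its symmetric difference with some open set is meager. -/
def HasBaireProperty [TopologicalSpace X] (A : Set X) : Prop :=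
  ∃ O : Set X, IsOpen O ∧ IsMeagre (symmDiff O A)

/-- A function is BP-measurable if preimages of functionally open sets have the Baire
property. -/
def BPMeasurable [TopologicalSpace X] [TopologicalSpace Y] (f : X → Y) : Prop :=
  ∀ U : Set Y, FunctionallyOpen U → HasBaireProperty (f ⁻¹' U)

/-- A function on a topological vector space is linearly continuous if its restriction to
every affine line is continuous. -/
def LinearlyContinuous [AddCommGroup X] [Module ℝ X] [TopologicalSpace X] [TopologicalSpace Y]
    (f : X → Y) : Prop :=
  ∀ x v : X, Continuous fun t : ℝ => f (x + t • v)

/-- A function is quasi-continuous if for every point `x`, every neighborhood `V` of `x`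
and every neighborhood `W` of `f x` there is a nonempty open `U ⊆ V` with `f '' U ⊆ W`. -/
def QuasiContinuous [TopologicalSpace X] [TopologicalSpace Y] (f : X → Y) : Prop :=
  ∀ x : X, ∀ V ∈ 𝓝 x, ∀ W ∈ 𝓝 (f x),
    ∃ U : Set X, IsOpen U ∧ U.Nonempty ∧ U ⊆ V ∧ f '' U ⊆ W

/-- A set `U` is conical at `x` if it is nonempty and contains the open segment from `x`
to each of its points. -/
def ConicalAt [AddCommGroup X] [Module ℝ X] (x : X) (U : Set X) : Prop :=
  U.Nonempty ∧ ∀ u ∈ U, ∀ t : ℝ, 0 < t → t < 1 → (1 - t) • x + t • u ∈ U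

/-- Conical quasi-continuity. -/
def ConicallyQuasiContinuous [AddCommGroup X] [Module ℝ X] [TopologicalSpace X]
    [TopologicalSpace Y] (f : X → Y) : Prop :=
  ∀ x : X, ∀ V : Set X, IsOpen V → ConicalAt x V → ∀ W : Set Y, IsOpen W → f x ∈ W →
    ∃ U : Set X, IsOpen U ∧ ConicalAt x U ∧ U ⊆ V ∧ f '' U ⊆ W

/-- `L` is an ℓ-neighborhood of `A`. -/
def IsLNbhd [AddCommGroup X] [Module ℝ X] (L A : Set X) : Prop :=
  ∀ a ∈ A, ∀ v : X, ∃ ε > (0 : ℝ), ∀ t : ℝ, 0 ≤ t → t < ε → a + t • v ∈ L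

/-- A set `A` is ℓ-miserable if `A ⊆ closure (X \ L)` for some closed ℓ-neighborhood `L`
of `A`. -/
def LMiserable [AddCommGroup X] [Module ℝ X] [TopologicalSpace X] (A : Set X) : Prop :=
  ∃ L : Set X, IsClosed L ∧ IsLNbhd L A ∧ A ⊆ closure Lᶜ

/-- A set is σ̄-ℓ-miserable if it is a countable union of closed ℓ-miserable sets. -/
def SigmaLMiserable [AddCommGroup X] [Module ℝ X] [TopologicalSpace X] (A : Set X) : Prop :=
  ∃ F : ℕ → Set X, (∀ n, IsClosed (F n) ∧ LMiserable (F n)) ∧ A = ⋃ n, F n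

/-- A function is of the first Baire class if it is a pointwise limit of a sequence of
continuous functions. -/
def BaireClassOne [TopologicalSpace X] [TopologicalSpace Y] (f : X → Y) : Prop :=
  ∃ g : ℕ → X → Y, (∀ n, Continuous (g n)) ∧
    ∀ x, Tendsto (fun n => g n x) atTop (𝓝 (f x))

/-- A topological space is cosmic if it is a continuous image of a separable metrizable
space. -/
def CosmicSpace (X : Type*) [TopologicalSpace X] : Prop :=
  ∃ (M : Type) (_ : TopologicalSpace M), MetrizableSpace M ∧ SeparableSpace M ∧
    ∃ g : M → X, Continuous g ∧ Function.Surjective g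

/-- A set `C` is strictly convex if for any distinct points of its closure the open segment
between them lies in `C`. -/
def StrictlyConvexSet [AddCommGroup X] [Module ℝ X] [TopologicalSpace X] (C : Set X) : Prop :=
  ∀ x ∈ closure C, ∀ y ∈ closure C, x ≠ y →
    ∀ t : ℝ, 0 < t → t < 1 → (1 - t) • x + t • y ∈ C

/-- A function is σ̄-continuous if the space is a countable union of closed sets on each of
which the function is continuous. -/
def SigmaContinuous [TopologicalSpace X] [TopologicalSpace Y] (f : X → Y) : Prop :=
  ∃ F : ℕ → Set X, (∀ n, IsClosed (F n)) ∧ (⋃ n, F n) = Set.univ ∧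
    ∀ n, ContinuousOn f (F n)

end Definitions

/-!
For open `U`, quasi-continuity gives `f ⁻¹' U ⊆ closure (interior (f ⁻¹' U))`, hence the Baire
property; conical quasi-continuity implies quasi-continuity because a balanced open
neighbourhood of `0`, translated to `x`, is `x`-conical.

For the converse, separate `f x` from `Wᶜ` by a continuous `g`. The set `B = {g ∘ f > 1/2}` has
the Baire property, is open along every line (by linear continuity), and `x` is interior to
`Bᶜ` along every line. Let `O` be open with `O ∆ B` meagre. A meagre set meets the line through
`x` and `z` in a meagre set for all `z` off a meagre set; hence the open sets `R n` of points
whose ray from `x` meets `O` at a parameter in `(0, 1/(n+1))` have meagre intersection, and by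
Baire some `R n` misses a nonempty open `N ⊆ V`. In a Baire vector space a meagre set that is
open along lines is empty; applied to the points of `N` whose ray meets `B` early, this shows
that the rays from `x` through `N` avoid `B` on `(0, 1/(n+1))`. The cone swept out by these
initial segments is the required `x`-conical open set.
-/

open AffineMap

section Baire

variable {Z : Type*} [TopologicalSpace Z]

theorem IsOpen.isNowhereDense_frontier {s : Set Z} (hs : IsOpen s) :
    IsNowhereDense (frontier s) := by
  rw [isClosed_frontier.isNowhereDense_iff, ← frontier_compl]
  exact interior_frontier hs.isClosed_compl

theorem hasBaireProperty_of_subset_closure_interior {A : Set Z}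
    (h : A ⊆ closure (interior A)) : HasBaireProperty A := by
  refine ⟨interior A, isOpen_interior,
    (isOpen_interior (s := A)).isNowhereDense_frontier.isMeagre.mono ?_⟩
  rw [symmDiff_of_le interior_subset, frontier, isOpen_interior.interior_eq]
  exact sdiff_subset_sdiff_left h

theorem exists_not_subset_closure_of_isMeagre_iInter [BaireSpace Z] {V : Set Z} (hV : IsOpen V)
    (hne : V.Nonempty) {R : ℕ → Set Z} (hR : ∀ n, IsOpen (R n)) (h : IsMeagre (⋂ n, R n)) :
    ∃ n, ¬ V ⊆ closure (R n) := by
  by_contra! hVR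
  have hfr : IsMeagre (⋃ n, frontier (R n)) :=
    isMeagre_iUnion fun n => (hR n).isNowhereDense_frontier.isMeagre
  refine not_isMeagre_of_isOpen hV hne ((h.union hfr).mono fun z hz => ?_)
  by_cases hzR : ∀ n, z ∈ R n
  · exact Or.inl (mem_iInter.mpr hzR)
  · obtain ⟨n, hn⟩ := not_forall.mp hzR
    exact Or.inr (mem_iUnion.mpr ⟨n, hVR n hz, by rwa [(hR n).interior_eq]⟩)

theorem exists_rat_ne_zero_mem_of_isClosed_of_not_isMeagre {T : Set ℝ} (hT : IsClosed T)
    (h : ¬ IsMeagre T) : ∃ q : ℚ, q ≠ 0 ∧ (q : ℝ) ∈ T := by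
  have hint : (interior T).Nonempty := by
    by_contra hempty
    exact h (hT.isNowhereDense_iff.mpr (not_nonempty_iff_eq_empty.mp hempty)).isMeagre
  obtain ⟨_, ⟨⟨q, rfl⟩, hq⟩, hqT⟩ :=
    (Rat.denseRange_cast.sdiff_singleton 0).exists_mem_open isOpen_interior hint
  exact ⟨q, Rat.cast_ne_zero.mp hq, interior_subset hqT⟩

end Baire

section QuasiContinuous

variable {X Y : Type*} [TopologicalSpace X] [TopologicalSpace Y] {f : X → Y}

theorem QuasiContinuous.subset_closure_interior_preimage (hf : QuasiContinuous f) {U : Set Y}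
    (hU : IsOpen U) : f ⁻¹' U ⊆ closure (interior (f ⁻¹' U)) := by
  intro a ha
  refine mem_closure_iff.mpr fun N hN haN => ?_
  obtain ⟨G, hG, ⟨z, hz⟩, hGN, hGU⟩ := hf a N (hN.mem_nhds haN) U (hU.mem_nhds ha)
  exact ⟨z, hGN hz, interior_maximal (image_subset_iff.mp hGU) hG hz⟩

theorem QuasiContinuous.bpMeasurable (hf : QuasiContinuous f) : BPMeasurable f := by
  rintro _ ⟨g, hg, V, hV, rfl⟩
  exact hasBaireProperty_of_subset_closure_interior
    (hf.subset_closure_interior_preimage (hV.preimage hg))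

end QuasiContinuous

section Homothety

variable {X : Type*} [AddCommGroup X] [Module ℝ X]

theorem homothety_eq_add_smul_sub (x z : X) (t : ℝ) : homothety x t z = x + t • (z - x) := by
  rw [homothety_apply, vsub_eq_sub, vadd_eq_add, add_comm]

theorem ConicalAt.homothety_mem {x z : X} {V : Set X} (hV : ConicalAt x V) (hz : z ∈ V)
    {t : ℝ} (ht : t ∈ Ioo 0 1) : homothety x t z ∈ V := by
  simpa only [homothety_eq_lineMap, lineMap_apply_module] using hV.2 z hz t ht.1 ht.2

theorem IsLNbhd.inter {L₁ L₂ A₁ A₂ : Set X} (h₁ : IsLNbhd L₁ A₁) (h₂ : IsLNbhd L₂ A₂) :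
    IsLNbhd (L₁ ∩ L₂) (A₁ ∩ A₂) := by
  intro a ha v
  obtain ⟨ε₁, hε₁, h₁⟩ := h₁ a ha.1 v
  obtain ⟨ε₂, hε₂, h₂⟩ := h₂ a ha.2 v
  exact ⟨min ε₁ ε₂, lt_min hε₁ hε₂, fun t ht0 ht =>
    ⟨h₁ t ht0 (ht.trans_le (min_le_left _ _)), h₂ t ht0 (ht.trans_le (min_le_right _ _))⟩⟩

theorem IsLNbhd.iUnion {ι : Sort*} {L A : ι → Set X} (h : ∀ i, IsLNbhd (L i) (A i)) :
    IsLNbhd (⋃ i, L i) (⋃ i, A i) := by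
  intro a ha v
  obtain ⟨i, hi⟩ := mem_iUnion.mp ha
  obtain ⟨ε, hε, hL⟩ := h i a hi v
  exact ⟨ε, hε, fun t ht0 ht => mem_iUnion.mpr ⟨i, hL t ht0 ht⟩⟩

theorem IsLNbhd.preimage_homothety {L A : Set X} (h : IsLNbhd L A) (x : X) (s : ℝ) :
    IsLNbhd (homothety x s ⁻¹' L) (homothety x s ⁻¹' A) := by
  intro a ha v
  obtain ⟨ε, hε, hL⟩ := h _ ha (s • v)
  refine ⟨ε, hε, fun t ht0 ht => ?_⟩
  have hline : homothety x s (a + t • v) = homothety x s a + t • (s • v) := by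
    simp only [homothety_eq_add_smul_sub]
    module
  simpa only [mem_preimage, hline] using hL t ht0 ht

theorem IsLNbhd.exists_rat_homothety_mem {B : Set X} (hB : IsLNbhd B B) {x z : X} {t s : ℝ}
    (hts : t < s) (ht : homothety x t z ∈ B) :
    ∃ q : ℚ, t < q ∧ (q : ℝ) < s ∧ homothety x (q : ℝ) z ∈ B := by
  obtain ⟨δ, hδ, hseg⟩ := hB _ ht (z - x)
  obtain ⟨q, htq, hqs⟩ := exists_rat_btwn (lt_min (lt_add_of_pos_right t hδ) hts)
  refine ⟨q, htq, hqs.trans_le (min_le_right _ _), ?_⟩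
  have h := hseg (q - t) (sub_nonneg.mpr htq.le)
    (by linarith [hqs.trans_le (min_le_left _ _)])
  rwa [homothety_eq_add_smul_sub, add_assoc, ← add_smul, add_sub_cancel,
    ← homothety_eq_add_smul_sub] at h

theorem IsLNbhd.mono {L L' A : Set X} (h : IsLNbhd L A) (hL : L ⊆ L') : IsLNbhd L' A :=
  fun a ha v => (h a ha v).imp fun _ ⟨hε, hseg⟩ => ⟨hε, fun t ht0 ht => hL (hseg t ht0 ht)⟩

theorem conicalAt_biUnion_image_homothety {N : Set X} (hN : N.Nonempty) (x : X) {ε : ℝ}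
    (hε : 0 < ε) : ConicalAt x (⋃ t ∈ Ioo 0 ε, homothety x t '' N) := by
  refine ⟨hN.image _ |>.mono (subset_biUnion_of_mem (u := fun t => homothety x t '' N)
    (show ε / 2 ∈ Ioo 0 ε from ⟨half_pos hε, half_lt_self hε⟩)), ?_⟩
  intro u hu s hs0 hs1
  obtain ⟨t, ht, z, hz, rfl⟩ : ∃ t ∈ Ioo 0 ε, ∃ z ∈ N, homothety x t z = u := by
    simpa using hu
  refine mem_biUnion (x := s * t) ⟨mul_pos hs0 ht.1, ?_⟩ ⟨z, hz, ?_⟩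
  · nlinarith [ht.1, ht.2]
  · simp only [homothety_eq_add_smul_sub]
    module

theorem biUnion_image_homothety_subset {x : X} {V N : Set X} (hV : ConicalAt x V) (hNV : N ⊆ V)
    {ε : ℝ} (hε : ε ≤ 1) : ⋃ t ∈ Ioo 0 ε, homothety x t '' N ⊆ V := by
  simp only [iUnion_subset_iff, image_subset_iff]
  exact fun t ht z hz => hV.homothety_mem (hNV hz) ⟨ht.1, ht.2.trans_le hε⟩

end Homothety

theorem LinearlyContinuous.isLNbhd_preimage {X Y : Type*} [AddCommGroup X] [Module ℝ X]
    [TopologicalSpace X] [TopologicalSpace Y] {f : X → Y} (hf : LinearlyContinuous f) {U : Set Y}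
    (hU : IsOpen U) {A : Set X} (hA : A ⊆ f ⁻¹' U) : IsLNbhd (f ⁻¹' U) A := by
  intro a ha v
  have h0 : (fun t : ℝ => f (a + t • v)) ⁻¹' U ∈ 𝓝 0 :=
    (hU.preimage (hf a v)).mem_nhds (by simpa using hA ha)
  obtain ⟨ε, hε, hball⟩ := Metric.mem_nhds_iff.mp h0
  exact ⟨ε, hε, fun t ht0 ht =>
    hball (by rwa [Metric.mem_ball, Real.dist_0_eq_abs, abs_of_nonneg ht0])⟩

section TopologicalVectorSpace

variable {X : Type*} [AddCommGroup X] [Module ℝ X] [TopologicalSpace X]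
  [IsTopologicalAddGroup X] [ContinuousSMul ℝ X]

theorem continuous_homothety_apply (x z : X) : Continuous fun t : ℝ => homothety x t z := by
  simp only [homothety_eq_lineMap]
  exact lineMap_continuous

theorem isOpen_biUnion_image_homothety {N : Set X} (hN : IsOpen N) (x : X) (ε : ℝ) :
    IsOpen (⋃ t ∈ Ioo 0 ε, homothety x t '' N) :=
  isOpen_biUnion fun t ht => homothety_isOpenMap x t ht.1.ne' N hN

theorem IsOpen.isLNbhd {N : Set X} (hN : IsOpen N) : IsLNbhd N N :=
  LinearlyContinuous.isLNbhd_preimage (f := id)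
    (fun _ _ => continuous_const.add (continuous_id.smul continuous_const)) hN subset_rfl

theorem exists_isOpen_conicalAt_subset {x : X} {V : Set X} (hV : V ∈ 𝓝 x) :
    ∃ V₀, IsOpen V₀ ∧ ConicalAt x V₀ ∧ V₀ ⊆ V := by
  set O := interior (balancedCore ℝ ((x + ·) ⁻¹' V))
  have hO : (0 : X) ∈ O := mem_interior_iff_mem_nhds.mpr (balancedCore_mem_nhds_zero
    ((continuous_const_add x).continuousAt.preimage_mem_nhds (by simpa using hV)))
  have hOb : Balanced ℝ O := (balancedCore_balanced _).interior hO
  refine ⟨(· - x) ⁻¹' O, isOpen_interior.preimage (continuous_sub_right x),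
    ⟨⟨x, by simpa using hO⟩, fun u hu t ht0 ht1 => ?_⟩, fun u hu => ?_⟩
  · have h := hOb.smul_mem (a := t) (by rw [Real.norm_eq_abs, abs_le]; constructor <;> linarith) hu
    simp only [mem_preimage]
    convert h using 1
    module
  · simpa using balancedCore_subset _ (interior_subset hu)

variable {Y : Type*} [TopologicalSpace Y] {f : X → Y}

theorem ConicallyQuasiContinuous.quasiContinuous (hf : ConicallyQuasiContinuous f) :
    QuasiContinuous f := by
  intro x V hV W hW
  obtain ⟨V₀, hV₀, hV₀c, hV₀V⟩ := exists_isOpen_conicalAt_subset hV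
  obtain ⟨U, hU, hUc, hUV₀, hUW⟩ :=
    hf x V₀ hV₀ hV₀c (interior W) isOpen_interior (mem_interior_iff_mem_nhds.mpr hW)
  exact ⟨U, hU, hUc.1, hUV₀.trans hV₀V, hUW.trans interior_subset⟩

theorem IsMeagre.setOf_exists_rat_homothety_mem {M : Set X} (hM : IsMeagre M) (x : X) :
    IsMeagre {z | ∃ q : ℚ, q ≠ 0 ∧ homothety x (q : ℝ) z ∈ M} := by
  have hunion : {z | ∃ q : ℚ, q ≠ 0 ∧ homothety x (q : ℝ) z ∈ M} =
      ⋃ (q : ℚ) (_ : q ≠ 0), homothety x (q : ℝ) ⁻¹' M := by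
    ext; simp
  rw [hunion]
  exact isMeagre_iUnion fun q => isMeagre_iUnion fun hq => hM.preimage_of_isOpenMap
    (homothety_continuous x _) (homothety_isOpenMap x _ (Rat.cast_ne_zero.mpr hq))

theorem IsMeagre.setOf_not_isMeagre_preimage_homothety {M : Set X} (hM : IsMeagre M) (x : X) :
    IsMeagre {z | ¬ IsMeagre ((fun t : ℝ => homothety x t z) ⁻¹' M)} := by
  obtain ⟨S, hSnd, hSc, hMS⟩ := isMeagre_iff_countable_union_isNowhereDense.mp hM
  have hcl : IsMeagre (⋃ s ∈ S, closure s) :=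
    isMeagre_biUnion hSc fun s hs => (hSnd s hs).closure.isMeagre
  refine (hcl.setOf_exists_rat_homothety_mem x).mono fun z hz => ?_
  have hsub : (fun t : ℝ => homothety x t z) ⁻¹' M ⊆
      ⋃ s ∈ S, (fun t : ℝ => homothety x t z) ⁻¹' closure s := by
    intro t ht
    obtain ⟨s, hs, hts⟩ := hMS ht
    exact mem_biUnion hs (subset_closure hts)
  obtain ⟨s, hs, hnm⟩ := exists_of_not_isMeagre_biUnion hSc fun h => hz (h.mono hsub)
  obtain ⟨q, hq, hqs⟩ := exists_rat_ne_zero_mem_of_isClosed_of_not_isMeagre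
    (isClosed_closure.preimage (continuous_homothety_apply x z)) hnm
  exact ⟨q, hq, mem_biUnion hs hqs⟩

theorem IsLNbhd.eq_empty_of_isMeagre [BaireSpace X] {S : Set X} (hS : IsLNbhd S S)
    (hM : IsMeagre S) : S = ∅ := by
  refine eq_empty_of_forall_notMem fun a ha => not_isMeagre_of_isOpen isOpen_univ ⟨a, trivial⟩
    ((hM.setOf_exists_rat_homothety_mem a).mono fun z _ => ?_)
  -- the ray from `a` through `z` enters `S` at a small rational parameter
  obtain ⟨ε, hε, hseg⟩ := hS a ha (z - a)
  obtain ⟨q, hq0, hqε⟩ := exists_rat_btwn hε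
  exact ⟨q, by exact_mod_cast hq0.ne', by
    rw [homothety_eq_add_smul_sub]; exact hseg q hq0.le hqε⟩

theorem isMeagre_iInter_biUnion_preimage_homothety {B O : Set X} (hO : IsOpen O)
    (hM : IsMeagre (symmDiff O B)) {x : X} (hx : IsLNbhd Bᶜ {x}) :
    IsMeagre (⋂ n : ℕ, ⋃ t ∈ Ioo (0 : ℝ) (1 / (n + 1)), homothety x t ⁻¹' O) := by
  refine (hM.setOf_not_isMeagre_preimage_homothety x).mono fun z hz => ?_
  obtain ⟨η, hη, hxB⟩ := hx x rfl (z - x)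
  obtain ⟨n, hn⟩ := exists_nat_one_div_lt hη
  obtain ⟨t₀, ht₀, ht₀O⟩ := mem_iUnion₂.mp (mem_iInter.mp hz n)
  set J := Ioo 0 η ∩ (fun t : ℝ => homothety x t z) ⁻¹' O
  have hJ : IsOpen J := isOpen_Ioo.inter (hO.preimage (continuous_homothety_apply x z))
  have hJne : J.Nonempty := ⟨t₀, ⟨ht₀.1, ht₀.2.trans hn⟩, ht₀O⟩
  refine fun hmeagre => not_isMeagre_of_isOpen hJ hJne (hmeagre.mono fun t ht => ?_)
  have htB := hxB t ht.1.1.le ht.1.2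
  rw [← homothety_eq_add_smul_sub] at htB
  exact mem_symmDiff.mpr (Or.inl ⟨ht.2, htB⟩)

variable [BaireSpace X]

theorem forall_homothety_notMem_of_isMeagre_symmDiff {B O N : Set X} (hB : IsLNbhd B B)
    (hM : IsMeagre (symmDiff O B)) (hN : IsOpen N) {x : X} {ε : ℝ}
    (hNO : ∀ z ∈ N, ∀ t ∈ Ioo 0 ε, homothety x t z ∉ O) :
    ∀ z ∈ N, ∀ t ∈ Ioo 0 ε, homothety x t z ∉ B := by
  set S := N ∩ ⋃ t ∈ Ioo 0 ε, homothety x t ⁻¹' B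
  have hS : IsLNbhd S S := hN.isLNbhd.inter
    (IsLNbhd.iUnion fun t => IsLNbhd.iUnion fun _ => hB.preimage_homothety x t)
  -- a point of `B` on such a ray can be moved to a rational parameter, where it lies in `B \ O`
  have hSM : IsMeagre S := by
    refine (hM.setOf_exists_rat_homothety_mem x).mono ?_
    rintro z ⟨hzN, hzB⟩
    obtain ⟨t, ht, htB⟩ := mem_iUnion₂.mp hzB
    obtain ⟨q, htq, hqε, hqB⟩ := hB.exists_rat_homothety_mem ht.2 htB
    have hq : (0 : ℝ) < q := ht.1.trans htq
    exact ⟨q, by exact_mod_cast hq.ne', mem_symmDiff.mpr (Or.inr ⟨hqB, hNO z hzN q ⟨hq, hqε⟩⟩)⟩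
  intro z hz t ht htB
  have hzS : z ∈ S := ⟨hz, mem_iUnion₂.mpr ⟨t, ht, htB⟩⟩
  rwa [hS.eq_empty_of_isMeagre hSM] at hzS

theorem exists_forall_homothety_notMem {B : Set X} (hBP : HasBaireProperty B)
    (hB : IsLNbhd B B) {x : X} (hx : IsLNbhd Bᶜ {x}) {V : Set X} (hV : IsOpen V)
    (hne : V.Nonempty) : ∃ ε ∈ Ioc (0 : ℝ) 1, ∃ N, IsOpen N ∧ N.Nonempty ∧ N ⊆ V ∧
      ∀ z ∈ N, ∀ t ∈ Ioo 0 ε, homothety x t z ∉ B := by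
  obtain ⟨O, hO, hM⟩ := hBP
  set R : ℕ → Set X := fun n => ⋃ t ∈ Ioo (0 : ℝ) (1 / (n + 1)), homothety x t ⁻¹' O
  have hR : ∀ n, IsOpen (R n) :=
    fun n => isOpen_biUnion fun t _ => hO.preimage (homothety_continuous x t)
  obtain ⟨n, hn⟩ := exists_not_subset_closure_of_isMeagre_iInter hV hne hR
    (isMeagre_iInter_biUnion_preimage_homothety hO hM hx)
  have hN : IsOpen (V \ closure (R n)) := hV.sdiff isClosed_closure
  refine ⟨1 / (n + 1), ⟨by positivity, div_le_one_of_le₀ (by simp) (by positivity)⟩,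
    V \ closure (R n), hN, not_subset.mp hn, sdiff_subset,
    forall_homothety_notMem_of_isMeagre_symmDiff hB hM hN fun z hz t ht htO => ?_⟩
  exact hz.2 (subset_closure (mem_iUnion₂.mpr ⟨t, ht, htO⟩))

theorem LinearlyContinuous.conicallyQuasiContinuous [CompletelyRegularSpace Y]
    (hf : LinearlyContinuous f) (hbp : BPMeasurable f) : ConicallyQuasiContinuous f := by
  intro x V hV hVc W hW hxW
  obtain ⟨g, hg, hgx, hgW⟩ :=
    CompletelyRegularSpace.completely_regular (f x) Wᶜ hW.isClosed_compl (not_not.mpr hxW)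
  have hg' : Continuous fun y => (g y : ℝ) := continuous_subtype_val.comp hg
  set B := f ⁻¹' ((fun y => (g y : ℝ)) ⁻¹' Ioi 2⁻¹)
  have hBP : HasBaireProperty B := hbp _ ⟨_, hg', _, isOpen_Ioi, rfl⟩
  have hB : IsLNbhd B B := hf.isLNbhd_preimage (isOpen_Ioi.preimage hg') subset_rfl
  have hx : IsLNbhd Bᶜ {x} := by
    have hC := hf.isLNbhd_preimage ((isOpen_Iio (a := (2 : ℝ)⁻¹)).preimage hg') (A := {x})
      (by simp [hgx])
    exact hC.mono fun z hz => lt_asymm (show (g (f z) : ℝ) < 2⁻¹ from hz)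
  obtain ⟨ε, hε, N, hN, hNne, hNV, hNB⟩ := exists_forall_homothety_notMem hBP hB hx hV hVc.1
  refine ⟨_, isOpen_biUnion_image_homothety hN x ε, conicalAt_biUnion_image_homothety hNne x hε.1,
    biUnion_image_homothety_subset hVc hNV hε.2, ?_⟩
  rintro _ ⟨_, hy, rfl⟩
  obtain ⟨t, ht, z, hz, rfl⟩ : ∃ t ∈ Ioo 0 ε, ∃ z ∈ N, homothety x t z = _ := by simpa using hy
  by_contra hW'
  exact hNB z hz t ht (show (2 : ℝ)⁻¹ < g (f _) by rw [hgW hW']; norm_num)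

end TopologicalVectorSpace

theorem stmt3_general {X Y : Type*} [AddCommGroup X] [Module ℝ X] [TopologicalSpace X]
    [IsTopologicalAddGroup X] [ContinuousSMul ℝ X] [BaireSpace X]
    [TopologicalSpace Y] [CompletelyRegularSpace Y]
    (f : X → Y) (hlin : LinearlyContinuous f) :
    (ConicallyQuasiContinuous f ↔ QuasiContinuous f) ∧
      (QuasiContinuous f ↔ BPMeasurable f) := by
  have hcq : ConicallyQuasiContinuous f → QuasiContinuous f :=
    ConicallyQuasiContinuous.quasiContinuous
  have hqb : QuasiContinuous f → BPMeasurable f := QuasiContinuous.bpMeasurable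
  have hbc : BPMeasurable f → ConicallyQuasiContinuous f := hlin.conicallyQuasiContinuous
  exact ⟨⟨hcq, hbc ∘ hqb⟩, ⟨hqb, hcq ∘ hbc⟩⟩

/-- For a linearly continuous function from a Baire topological vector space to a Tychonoff
space, conical quasi-continuity, quasi-continuity and BP-measurability are equivalent. -/
theorem stmt3 {X Y : Type*} [AddCommGroup X] [Module ℝ X] [TopologicalSpace X]
    [IsTopologicalAddGroup X] [ContinuousSMul ℝ X] [T2Space X] [BaireSpace X]
    [TopologicalSpace Y] [CompletelyRegularSpace Y] [T2Space Y]
    (f : X → Y) (hlin : LinearlyContinuous f) :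
    (ConicallyQuasiContinuous f ↔ QuasiContinuous f) ∧
      (QuasiContinuous f ↔ BPMeasurable f) :=
  stmt3_general f hlin
end

section
/- Every conically quasi-continuous function f : X → Y from a second-countable topological vector space X to a topological space Y is F_σ-measurable. -/
open Topology Filter Set TopologicalSpace

/-!
Compose `f` with a continuous `g : Y → ℝ`; conical quasi-continuity survives, so it suffices to
show that `r⁻¹' V` is `Fσ` for a conically quasi-continuous `r : X → ℝ` and open `V ⊆ ℝ`.
For a basic open set `B` and a closed interval `I`, let `S` be the set of `x` such that `r` maps
the open cone `{(1 - t) • x + t • b | 0 < t < 1, b ∈ B}` into `I`. If `x ∈ closure S` had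
`r x ∉ I`, conical quasi-continuity at `x` would give an open set `U` inside the cone with
`r '' U` disjoint from `I`; a point `(1 - s) • x + s • b` of `U` stays in `U` when `x` is moved
slightly to a point `x'` of `S`, where `r` takes a value in `I`. Hence `closure S ⊆ r⁻¹' I`.
Conversely, conical quasi-continuity with `V = univ` puts every point of `r⁻¹' V` in such an `S`
with `I ⊆ V`, and countably many pairs suffice: `B` from a countable basis, `I` with rational
endpoints.
-/

theorem isFSigma_iUnion {X ι : Type*} [TopologicalSpace X] [Countable ι] {F : ι → Set X}
    (hF : ∀ i, IsClosed (F i)) : IsFSigma (⋃ i, F i) := by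
  cases isEmpty_or_nonempty ι
  · exact ⟨fun _ => ∅, fun _ => isClosed_empty, by simp⟩
  · obtain ⟨e, he⟩ := exists_surjective_nat ι
    exact ⟨F ∘ e, fun n => hF (e n), (he.iUnion_comp F).symm⟩

theorem isFSigma_biUnion {X ι : Type*} [TopologicalSpace X] {s : Set ι} (hs : s.Countable)
    {F : ι → Set X} (hF : ∀ i ∈ s, IsClosed (F i)) : IsFSigma (⋃ i ∈ s, F i) := by
  have := hs.to_subtype
  rw [biUnion_eq_iUnion]
  exact isFSigma_iUnion fun i => hF i i.2

theorem exists_rat_Icc_subset_of_isOpen {V : Set ℝ} (hV : IsOpen V) {a : ℝ} (ha : a ∈ V) :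
    ∃ p q : ℚ, (p : ℝ) < a ∧ a < q ∧ Icc (p : ℝ) q ⊆ V := by
  obtain ⟨ε, hε, hball⟩ := Metric.nhds_basis_closedBall.mem_iff.mp (hV.mem_nhds ha)
  obtain ⟨p, hp₁, hp₂⟩ := exists_rat_btwn (show a - ε < a by linarith)
  obtain ⟨q, hq₁, hq₂⟩ := exists_rat_btwn (show a < a + ε by linarith)
  refine ⟨p, q, hp₂, hq₁, ?_⟩
  rw [Real.closedBall_eq_Icc] at hball
  exact (Icc_subset_Icc hp₁.le hq₂.le).trans hball

section Cone

variable {X : Type*} [AddCommGroup X] [Module ℝ X]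

def openCone (x : X) (B : Set X) : Set X :=
  image2 (fun (t : ℝ) u => (1 - t) • x + t • u) (Ioo 0 1) B

theorem mem_openCone {x z : X} {B : Set X} :
    z ∈ openCone x B ↔ ∃ t ∈ Ioo (0 : ℝ) 1, ∃ u ∈ B, (1 - t) • x + t • u = z :=
  mem_image2

theorem conicalAt_openCone (x : X) {B : Set X} (hB : B.Nonempty) :
    ConicalAt x (openCone x B) := by
  obtain ⟨b, hb⟩ := hB
  refine ⟨⟨_, mem_openCone.mpr ⟨1 / 2, ⟨by norm_num, by norm_num⟩, b, hb, rfl⟩⟩, ?_⟩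
  rintro _ ⟨s, ⟨hs₀, hs₁⟩, u, hu, rfl⟩ t ht₀ ht₁
  refine mem_openCone.mpr ⟨t * s, ⟨mul_pos ht₀ hs₀, by nlinarith⟩, u, hu, ?_⟩
  module

theorem ConicalAt.openCone_subset {x : X} {U B : Set X} (hU : ConicalAt x U) (hB : B ⊆ U) :
    openCone x B ⊆ U := by
  rintro _ ⟨t, ⟨ht₀, ht₁⟩, u, hu, rfl⟩
  exact hU.2 u (hB hu) t ht₀ ht₁

variable [TopologicalSpace X] [IsTopologicalAddGroup X] [ContinuousSMul ℝ X]

theorem isOpen_openCone (x : X) {B : Set X} (hB : IsOpen B) : IsOpen (openCone x B) := by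
  rw [openCone, ← iUnion_image_left]
  refine isOpen_biUnion fun t ht => ?_
  rw [show (fun u : X => (1 - t) • x + t • u) = (fun y => (1 - t) • x + y) ∘ (t • ·) from rfl,
    image_comp]
  exact isOpenMap_add_left _ _ (isOpenMap_smul₀ ht.1.ne' _ hB)

end Cone

namespace ConicallyQuasiContinuous

variable {X Y : Type*} [AddCommGroup X] [Module ℝ X] [TopologicalSpace X] [TopologicalSpace Y]
  {f : X → Y}

theorem comp {Z : Type*} [TopologicalSpace Z] (hf : ConicallyQuasiContinuous f) {g : Y → Z}
    (hg : Continuous g) : ConicallyQuasiContinuous (g ∘ f) := by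
  intro x V hV hVx W hW hxW
  obtain ⟨U, hU, hUx, hUV, hUW⟩ := hf x V hV hVx (g ⁻¹' W) (hW.preimage hg) hxW
  exact ⟨U, hU, hUx, hUV, by rw [image_comp]; exact image_subset_iff.mpr hUW⟩

theorem exists_mapsTo_openCone (hf : ConicallyQuasiContinuous f) {b : Set (Set X)}
    (hb : IsTopologicalBasis b) {x : X} {W : Set Y} (hW : IsOpen W) (hx : f x ∈ W) :
    ∃ B ∈ b, B.Nonempty ∧ MapsTo f (openCone x B) W := by
  obtain ⟨U, hU, hUx, -, hUW⟩ :=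
    hf x univ isOpen_univ ⟨univ_nonempty, fun _ _ _ _ _ => mem_univ _⟩ W hW hx
  obtain ⟨u, hu⟩ := hUx.1
  obtain ⟨B, hB, huB, hBU⟩ := hb.exists_subset_of_mem_open hu hU
  exact ⟨B, hB, ⟨u, huB⟩, fun z hz => hUW (mem_image_of_mem f (hUx.openCone_subset hBU hz))⟩

variable [IsTopologicalAddGroup X] [ContinuousSMul ℝ X]

theorem closure_setOf_mapsTo_openCone_subset (hf : ConicallyQuasiContinuous f) {B : Set X}
    (hB : IsOpen B) (hBne : B.Nonempty) {F : Set Y} (hF : IsClosed F) :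
    closure {x | MapsTo f (openCone x B) F} ⊆ f ⁻¹' F := by
  intro x hx
  by_contra hxF
  obtain ⟨U, hU, hUx, hUC, hUF⟩ :=
    hf x _ (isOpen_openCone x hB) (conicalAt_openCone x hBne) Fᶜ hF.isOpen_compl hxF
  obtain ⟨u, hu⟩ := hUx.1
  obtain ⟨s, hs, b, hb, rfl⟩ := mem_openCone.mp (hUC hu)
  have hN : IsOpen ((fun z => (1 - s) • z + s • b) ⁻¹' U) :=
    hU.preimage ((continuous_const_smul _).add continuous_const)
  obtain ⟨x', hx'U, hx'S⟩ := mem_closure_iff.mp hx _ hN hu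
  exact hUF (mem_image_of_mem f hx'U) (hx'S (mem_openCone.mpr ⟨s, hs, b, hb, rfl⟩))

theorem isFSigma_preimage [SecondCountableTopology X] {r : X → ℝ}
    (hr : ConicallyQuasiContinuous r) {V : Set ℝ} (hV : IsOpen V) : IsFSigma (r ⁻¹' V) := by
  obtain ⟨b, hbc, -, hb⟩ := exists_countable_basis X
  let s : Set (Set X × ℚ × ℚ) := {c | c.1 ∈ b ∧ c.1.Nonempty ∧ Icc (c.2.1 : ℝ) c.2.2 ⊆ V}
  have hs : s.Countable :=
    (hbc.prod countable_univ).mono fun _ hc => mk_mem_prod hc.1 (mem_univ _)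
  suffices r ⁻¹' V = ⋃ c ∈ s, closure {x | MapsTo r (openCone x c.1) (Icc (c.2.1 : ℝ) c.2.2)} by
    rw [this]
    exact isFSigma_biUnion hs fun _ _ => isClosed_closure
  refine Subset.antisymm (fun x hx => ?_) (iUnion₂_subset fun c hc => ?_)
  · obtain ⟨p, q, hp, hq, hpq⟩ := exists_rat_Icc_subset_of_isOpen hV hx
    obtain ⟨B, hB, hBne, hmaps⟩ := hr.exists_mapsTo_openCone hb isOpen_Ioo ⟨hp, hq⟩
    exact mem_biUnion (x := (B, p, q)) ⟨hB, hBne, hpq⟩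
      (subset_closure (hmaps.mono_right Ioo_subset_Icc_self))
  · exact (hr.closure_setOf_mapsTo_openCone_subset (hb.isOpen hc.1) hc.2.1 isClosed_Icc).trans
      (preimage_mono hc.2.2)

end ConicallyQuasiContinuous

theorem stmt4_general {X Y : Type*} [AddCommGroup X] [Module ℝ X] [TopologicalSpace X]
    [IsTopologicalAddGroup X] [ContinuousSMul ℝ X] [SecondCountableTopology X]
    [TopologicalSpace Y]
    (f : X → Y) (hf : ConicallyQuasiContinuous f) :
    FSigmaMeasurable f := by
  rintro _ ⟨g, hg, V, hV, rfl⟩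
  exact (hf.comp hg).isFSigma_preimage hV

/-- Every conically quasi-continuous function from a second-countable topological vector
space to a topological space is `Fσ`-measurable. -/
theorem stmt4 {X Y : Type*} [AddCommGroup X] [Module ℝ X] [TopologicalSpace X]
    [IsTopologicalAddGroup X] [ContinuousSMul ℝ X] [T2Space X] [SecondCountableTopology X]
    [TopologicalSpace Y]
    (f : X → Y) (hf : ConicallyQuasiContinuous f) :
    FSigmaMeasurable f :=
  stmt4_general f hf
end
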